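/- arXiv:2208.06648 — 3 statements merged into one kernel-verified Lean document; each statement's English description precedes it below -/
import Mathlib

section
/- Group mean imputation reconstruction error (Theorem 1, first part): L_g^{group} = ( −ρ_g · σ_{X|G} / √(α_g(1−α_g)) )² + Var(X | {O=0} ∩ G), i.e. the reconstruction error of group mean imputation in group g equals the square of the group imputation bias B_g^{group} = −ρ_g σ_{X|G}/√(α_g(1−α_g)) plus the variance of the unobserved data in group g. -/
/-!
Expanding the square around the mean of the unobserved data gives
`L_g(c) = (c - E[X | O = 0, G])² + Var(X | O = 0, G)`. For a `0/1`-valued `O`,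
`Cov(O, X | G) = α_g (1 - α_g) (μ_g^O - E[X | O = 0, G])`, so the bias
`-ρ_g σ_{X|G} / √(α_g (1 - α_g)) = -Cov(O, X | G) / (α_g (1 - α_g))` is exactly
`E[X | O = 0, G] - μ_g^O`.
-/

open MeasureTheory ProbabilityTheory

/-- Covariance of two real random variables under the measure `μ`. -/
noncomputable def condCov {Ω : Type*} [MeasurableSpace Ω] (μ : Measure Ω) (O X : Ω → ℝ) : ℝ :=
  ∫ ω, (O ω - ∫ x, O x ∂μ) * (X ω - ∫ x, X x ∂μ) ∂μ

namespace ProbabilityTheory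

variable {Ω : Type*} [MeasurableSpace Ω]

lemma _root_.MeasureTheory.MemLp.cond {E : Type*} [NormedAddCommGroup E] {μ : Measure Ω}
    {f : Ω → E} {p : ENNReal}
    (hf : MemLp f p μ) (s : Set Ω) : MemLp f p μ[|s] := by
  rcases eq_or_ne (μ s) 0 with hs | hs
  · simp [cond_eq_zero_of_meas_eq_zero hs]
  · exact (hf.restrict s).smul_measure (ENNReal.inv_ne_top.2 hs)

lemma measureReal_mul_integral_cond (μ : Measure Ω) [IsFiniteMeasure μ] (s : Set Ω)
    (f : Ω → ℝ) : μ.real s * ∫ ω, f ω ∂μ[|s] = ∫ ω in s, f ω ∂μ := by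
  rcases eq_or_ne (μ s) 0 with hs | hs
  · simp [Measure.restrict_eq_zero.2 hs, cond_eq_zero_of_meas_eq_zero hs]
  · rw [cond, integral_smul_measure, smul_eq_mul, ← mul_assoc, ENNReal.toReal_inv,
      ← Measure.real, mul_inv_cancel₀ ((measureReal_ne_zero_iff (measure_ne_top μ s)).2 hs),
      one_mul]

lemma integral_sq_sub_eq_sq_sub_integral_add_variance (μ : Measure Ω) [IsProbabilityMeasure μ]
    {X : Ω → ℝ} (hX : MemLp X 2 μ) (c : ℝ) :
    ∫ ω, (c - X ω) ^ 2 ∂μ = (c - ∫ ω, X ω ∂μ) ^ 2 + Var[X; μ] := by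
  have hcX : MemLp (fun ω => c - X ω) 2 μ := (memLp_const c).sub hX
  have hmean : ∫ ω, (c - X ω) ∂μ = c - ∫ ω, X ω ∂μ := by
    rw [integral_sub (integrable_const c) (hX.integrable one_le_two), integral_const,
      probReal_univ, one_smul]
  have hvar := variance_eq_sub hcX
  rw [variance_const_sub hX.aestronglyMeasurable] at hvar
  simp only [Pi.pow_apply, hmean] at hvar
  linarith

lemma covariance_indicator_one (μ : Measure Ω) [IsProbabilityMeasure μ] {s : Set Ω}
    (hs : MeasurableSet s) {X : Ω → ℝ} (hX : MemLp X 2 μ) :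
    cov[s.indicator 1, X; μ] =
      μ.real s * μ.real sᶜ * (∫ ω, X ω ∂μ[|s] - ∫ ω, X ω ∂μ[|sᶜ]) := by
  have hind : MemLp (s.indicator (1 : Ω → ℝ)) 2 μ :=
    (memLp_const (1 : ℝ)).indicator hs
  have hprod : s.indicator (1 : Ω → ℝ) * X = s.indicator X := by
    ext ω; by_cases h : ω ∈ s <;> simp [h]
  have hmean_s := measureReal_mul_integral_cond μ s X
  have hmean_sc := measureReal_mul_integral_cond μ sᶜ X
  rw [probReal_compl_eq_one_sub hs] at hmean_sc ⊢
  rw [covariance_eq_sub hind hX, hprod, integral_indicator hs, integral_indicator_one hs,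
    ← integral_add_compl hs (hX.integrable one_le_two)]
  linear_combination -(1 - μ.real s) * hmean_s + μ.real s * hmean_sc

end ProbabilityTheory

theorem group_mean_imputation_error_general
    {Ω : Type*} [MeasurableSpace Ω] (μ : Measure Ω) [IsProbabilityMeasure μ]
    (X O : Ω → ℝ) (G : Set Ω)
    (hOm : Measurable O) (hG : MeasurableSet G)
    (hX2 : MemLp X 2 μ)
    (hO01 : ∀ ω, O ω = 0 ∨ O ω = 1)
    (αg σXG ρg μgO : ℝ)
    (hαg : αg = ∫ ω, O ω ∂(μ[|G]))
    (hρg : ρg = condCov (μ[|G]) O X / (Real.sqrt (αg * (1 - αg)) * σXG))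
    (hμgO : μgO = ∫ ω, X ω ∂(μ[|O ⁻¹' {1} ∩ G]))
    (hα0 : 0 < αg) (hα1 : αg < 1) (hσpos : 0 < σXG)
    (hpos0 : 0 < μ (O ⁻¹' {0} ∩ G)) :
    (∫ ω, (μgO - X ω) ^ 2 ∂(μ[|O ⁻¹' {0} ∩ G])) =
      (-(ρg * σXG) / Real.sqrt (αg * (1 - αg))) ^ 2 +
        variance X (μ[|O ⁻¹' {0} ∩ G]) := by
  set s := O ⁻¹' {1}
  have hs : MeasurableSet s := hOm (measurableSet_singleton 1)
  have hO : O = s.indicator 1 := by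
    ext ω; rcases hO01 ω with h | h <;> simp [s, h]
  have hs0 : O ⁻¹' {0} = sᶜ := by
    ext ω; rcases hO01 ω with h | h <;> simp [s, h]
  rw [hs0] at hpos0 ⊢
  have : IsProbabilityMeasure μ[|G] :=
    cond_isProbabilityMeasure (hpos0.trans_le (measure_mono Set.inter_subset_right)).ne'
  have : IsProbabilityMeasure μ[|sᶜ ∩ G] := cond_isProbabilityMeasure hpos0.ne'
  have hcond (t : Set Ω) (ht : MeasurableSet t) : μ[|t ∩ G] = μ[|G][|t] := by
    rw [Set.inter_comm, cond_cond_eq_cond_inter hG ht]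
  have hα : αg = (μ[|G]).real s := by rw [hαg, hO, integral_indicator_one hs]
  have h1α : 1 - αg = (μ[|G]).real sᶜ := by rw [hα, probReal_compl_eq_one_sub hs]
  have hcov : condCov μ[|G] O X = αg * (1 - αg) * (μgO - ∫ ω, X ω ∂μ[|sᶜ ∩ G]) := by
    rw [h1α, hα, hμgO, hcond s hs, hcond sᶜ hs.compl, hO]
    exact covariance_indicator_one _ hs (hX2.cond G)
  have hbias : -(ρg * σXG) / Real.sqrt (αg * (1 - αg)) = ∫ ω, X ω ∂μ[|sᶜ ∩ G] - μgO := by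
    have hp : 0 < αg * (1 - αg) := mul_pos hα0 (sub_pos.2 hα1)
    have hsqrt := (Real.sqrt_pos.2 hp).ne'
    rw [hρg, hcov]
    field_simp
    rw [Real.sq_sqrt hp.le]
    ring
  rw [integral_sq_sub_eq_sq_sub_integral_add_variance _ (hX2.cond _), hbias]
  ring

/-- (Theorem 1, first part.) The reconstruction error of group mean imputation
equals the square of the group imputation bias `−ρ_g σ_{X|G}/√(α_g(1−α_g))` plus the variance of
the unobserved data in group `g`. -/
theorem group_mean_imputation_error
    {Ω : Type*} [MeasurableSpace Ω] (μ : Measure Ω) [IsProbabilityMeasure μ]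
    (X O : Ω → ℝ) (G : Set Ω)
    (hXm : Measurable X) (hOm : Measurable O) (hG : MeasurableSet G)
    (hX2 : MemLp X 2 μ)
    (hO01 : ∀ ω, O ω = 0 ∨ O ω = 1)
    (αg σXG ρg μgO : ℝ)
    (hαg : αg = ∫ ω, O ω ∂(μ[|G]))
    (hσXG : σXG = Real.sqrt (variance X (μ[|G])))
    (hρg : ρg = condCov (μ[|G]) O X / (Real.sqrt (αg * (1 - αg)) * σXG))
    (hμgO : μgO = ∫ ω, X ω ∂(μ[|O ⁻¹' {1} ∩ G]))
    (hα0 : 0 < αg) (hα1 : αg < 1) (hσpos : 0 < σXG)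
    (hpos1 : 0 < μ (O ⁻¹' {1} ∩ G)) (hpos0 : 0 < μ (O ⁻¹' {0} ∩ G)) :
    (∫ ω, (μgO - X ω) ^ 2 ∂(μ[|O ⁻¹' {0} ∩ G])) =
      (-(ρg * σXG) / Real.sqrt (αg * (1 - αg))) ^ 2 +
        variance X (μ[|O ⁻¹' {0} ∩ G]) :=
  group_mean_imputation_error_general μ X O G hOm hG hX2 hO01 αg σXG ρg μgO hαg hρg hμgO hα0 hα1
    hσpos hpos0
end

section
/- The deviation of the unobserved group mean from the true group mean satisfies E[X | {O=0} ∩ G] − μ_g = −Cov(O, X | G)/(1−α_g) = −ρ_g · √(α_g/(1−α_g)) · σ_{X|G}. -/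
open MeasureTheory ProbabilityTheory

/-! With `S = {O = 1}` we have `O = 1_S` and `{O = 0} = Sᶜ`, and conditioning `μ` on `G` and then
on `Sᶜ` is conditioning on `{O = 0} ∩ G`. Under any probability measure `ν`,
`Cov(1_S, X) = ∫_S X - ν(S) E[X] = ν(Sᶜ) E[X] - ∫_{Sᶜ} X = -ν(Sᶜ) (E[X | Sᶜ] - E[X])`,
and for `ν = μ(·|G)` we have `ν(Sᶜ) = 1 - α_g`. The second form follows by substituting
`Cov(O, X | G) = ρ_g √(α_g (1 - α_g)) σ_{X|G}`. -/

theorem condCov_eq_covariance {Ω : Type*} [MeasurableSpace Ω] (μ : Measure Ω) (O X : Ω → ℝ) :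
    condCov μ O X = cov[O, X; μ] :=
  rfl

theorem integral_cond_eq_inv_mul_setIntegral {Ω : Type*} [MeasurableSpace Ω] (μ : Measure Ω)
    (s : Set Ω) (f : Ω → ℝ) : ∫ ω, f ω ∂μ[|s] = (μ.real s)⁻¹ * ∫ ω in s, f ω ∂μ := by
  rw [ProbabilityTheory.cond, integral_smul_measure, ENNReal.toReal_inv, smul_eq_mul, measureReal_def]

section IndicatorCovariance

variable {Ω : Type*} [MeasurableSpace Ω] {ν : Measure Ω} [IsProbabilityMeasure ν]
  {s : Set Ω} {X : Ω → ℝ}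

theorem covariance_indicator_one_left (hs : MeasurableSet s) (hX : Integrable X ν) :
    cov[s.indicator 1, X; ν] = ∫ ω in s, X ω ∂ν - ν.real s * ∫ ω, X ω ∂ν := by
  rw [covariance, integral_indicator_one hs]
  set p := ν.real s
  set m := ∫ ω, X ω ∂ν
  have h_expand : ∀ ω, (s.indicator 1 ω - p) * (X ω - m) =
      s.indicator X ω - p * X ω - (m * s.indicator 1 ω - p * m) := by
    intro ω
    by_cases hω : ω ∈ s <;> simp [hω] <;> ring
  have h_one : Integrable (s.indicator 1) ν := (integrable_const (1 : ℝ)).indicator hs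
  simp only [h_expand]
  rw [integral_sub, integral_sub, integral_sub, integral_indicator hs, integral_const_mul,
    integral_const_mul, integral_indicator_one hs, integral_const, probReal_univ, one_smul]
  · ring
  exacts [h_one.const_mul m, integrable_const _, hX.indicator hs, hX.const_mul p,
    (hX.indicator hs).sub (hX.const_mul p), (h_one.const_mul m).sub (integrable_const _)]

theorem integral_cond_compl_sub_integral (hs : MeasurableSet s) (hX : Integrable X ν)
    (hs_ne : ν.real s ≠ 1) :
    ∫ ω, X ω ∂ν[|sᶜ] - ∫ ω, X ω ∂ν = -cov[s.indicator 1, X; ν] / (1 - ν.real s) := by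
  have h_ne : 1 - ν.real s ≠ 0 := sub_ne_zero.2 hs_ne.symm
  rw [integral_cond_eq_inv_mul_setIntegral, covariance_indicator_one_left hs hX,
    probReal_compl_eq_one_sub hs, setIntegral_compl hs hX]
  field_simp
  ring

end IndicatorCovariance

theorem div_sqrt_mul_mul_sqrt_div_mul {a σ : ℝ} (c : ℝ) (ha0 : 0 < a) (ha1 : a < 1)
    (hσ : σ ≠ 0) :
    c / (Real.sqrt (a * (1 - a)) * σ) * Real.sqrt (a / (1 - a)) * σ = c / (1 - a) := by
  have hb : 0 < 1 - a := by linarith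
  have hsa : Real.sqrt a ≠ 0 := by positivity
  have hsb : Real.sqrt (1 - a) ≠ 0 := by positivity
  have hsq : Real.sqrt (1 - a) ^ 2 = 1 - a := Real.sq_sqrt hb.le
  rw [Real.sqrt_mul ha0.le, Real.sqrt_div ha0.le]
  field_simp
  rw [hsq]

theorem unobserved_group_mean_deviation_general
    {Ω : Type*} [MeasurableSpace Ω] (μ : Measure Ω) [IsProbabilityMeasure μ]
    (X O : Ω → ℝ) (G : Set Ω)
    (hOm : Measurable O) (hG : MeasurableSet G)
    (hX2 : MemLp X 2 μ)
    (hO01 : ∀ ω, O ω = 0 ∨ O ω = 1)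
    (αg σXG ρg μg : ℝ)
    (hαg : αg = ∫ ω, O ω ∂(μ[|G]))
    (hμg : μg = ∫ ω, X ω ∂(μ[|G]))
    (hρg : ρg = condCov (μ[|G]) O X / (Real.sqrt (αg * (1 - αg)) * σXG))
    (hα0 : 0 < αg) (hα1 : αg < 1) (hσpos : 0 < σXG) :
    (∫ ω, X ω ∂(μ[|O ⁻¹' {0} ∩ G])) - μg = -(condCov (μ[|G]) O X) / (1 - αg) ∧
    (∫ ω, X ω ∂(μ[|O ⁻¹' {0} ∩ G])) - μg = -(ρg * Real.sqrt (αg / (1 - αg)) * σXG) := by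
  set S := O ⁻¹' {1}
  have hS : MeasurableSet S := hOm (measurableSet_singleton 1)
  have hO : O = S.indicator 1 := funext fun ω => by rcases hO01 ω with h | h <;> simp [S, h]
  have hT : O ⁻¹' {0} = Sᶜ := by ext ω; rcases hO01 ω with h | h <;> simp [S, h]
  have hG0 : μ G ≠ 0 := fun h => by simp [hαg, cond_eq_zero_of_meas_eq_zero h] at hα0
  have : IsProbabilityMeasure μ[|G] := cond_isProbabilityMeasure hG0
  have hXG : Integrable X μ[|G] :=
    (hX2.integrable one_le_two).restrict.smul_measure (ENNReal.inv_ne_top.2 hG0)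
  have hαS : αg = (μ[|G]).real S := by rw [hαg, hO, integral_indicator_one hS]
  have hcond : μ[|O ⁻¹' {0} ∩ G] = μ[|G][|Sᶜ] := by
    rw [hT, cond_cond_eq_cond_inter hG hS.compl, Set.inter_comm]
  have key := integral_cond_compl_sub_integral hS hXG (hαS ▸ hα1.ne)
  rw [← hO, ← hαS] at key
  have h_first : (∫ ω, X ω ∂(μ[|O ⁻¹' {0} ∩ G])) - μg = -(condCov (μ[|G]) O X) / (1 - αg) := by
    rw [hcond, hμg, key, condCov_eq_covariance]
  refine ⟨h_first, ?_⟩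
  rw [h_first, hρg, div_sqrt_mul_mul_sqrt_div_mul _ hα0 hα1 hσpos.ne', neg_div]

/-- The deviation of the unobserved group mean from the true group mean:
`E[X | {O=0} ∩ G] − μ_g = −Cov(O, X | G)/(1−α_g) = −ρ_g √(α_g/(1−α_g)) σ_{X|G}`. -/
theorem unobserved_group_mean_deviation
    {Ω : Type*} [MeasurableSpace Ω] (μ : Measure Ω) [IsProbabilityMeasure μ]
    (X O : Ω → ℝ) (G : Set Ω)
    (hXm : Measurable X) (hOm : Measurable O) (hG : MeasurableSet G)
    (hX2 : MemLp X 2 μ)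
    (hO01 : ∀ ω, O ω = 0 ∨ O ω = 1)
    (αg σXG ρg μg : ℝ)
    (hαg : αg = ∫ ω, O ω ∂(μ[|G]))
    (hμg : μg = ∫ ω, X ω ∂(μ[|G]))
    (hσXG : σXG = Real.sqrt (variance X (μ[|G])))
    (hρg : ρg = condCov (μ[|G]) O X / (Real.sqrt (αg * (1 - αg)) * σXG))
    (hα0 : 0 < αg) (hα1 : αg < 1) (hσpos : 0 < σXG)
    (hpos0 : 0 < μ (O ⁻¹' {0} ∩ G)) :
    (∫ ω, X ω ∂(μ[|O ⁻¹' {0} ∩ G])) - μg = -(condCov (μ[|G]) O X) / (1 - αg) ∧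
    (∫ ω, X ω ∂(μ[|O ⁻¹' {0} ∩ G])) - μg = -(ρg * Real.sqrt (αg / (1 - αg)) * σXG) :=
  unobserved_group_mean_deviation_general μ X O G hOm hG hX2 hO01 αg σXG ρg μg hαg hμg hρg hα0 hα1
    hσpos
end

section
/- Under the assumption that the unobserved-data variances agree across groups, Var(X | {O=0} ∩ G) = Var(X | {O=0} ∩ Gᶜ), the reconstruction error gaps are differences of squared imputation biases: Δ^{group}_g = (B_g^{group})² − (B_{¬g}^{group})² and Δ^{pop}_g = (B_g^{pop})² − (B_{¬g}^{pop})². -/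
/-!
Each reconstruction error is a mean squared error of a constant predictor, which splits as the
variance of `X` on the unobserved cell plus the squared bias of the predictor. Taking the
difference across `G` and `Gᶜ`, the variance terms cancel by assumption.
-/

open MeasureTheory ProbabilityTheory

theorem MeasureTheory.MemLp.cond_s11 {Ω E : Type*} [MeasurableSpace Ω] [NormedAddCommGroup E]
    {μ : Measure Ω} {p : ENNReal} {X : Ω → E} (hX : MemLp X p μ) {s : Set Ω} (hs : μ s ≠ 0) :
    MemLp X p μ[|s] :=
  (hX.restrict s).smul_measure (ENNReal.inv_ne_top.2 hs)

namespace ProbabilityTheory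

variable {Ω : Type*} [MeasurableSpace Ω] {X : Ω → ℝ}

lemma integral_const_sub_sq_eq_variance_add_sq {μ : Measure Ω} [IsProbabilityMeasure μ]
    (hX : MemLp X 2 μ) (c : ℝ) :
    ∫ ω, (c - X ω) ^ 2 ∂μ = Var[X; μ] + (μ[X] - c) ^ 2 := by
  have hcX : MemLp (fun ω ↦ c - X ω) 2 μ := (memLp_const c).sub hX
  rw [← variance_const_sub hX.aestronglyMeasurable c, variance_eq_sub hcX,
    integral_sub (integrable_const c) (hX.integrable one_le_two), integral_const]
  simp only [probReal_univ, one_smul, Pi.pow_apply]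
  ring

lemma integral_const_sub_sq_sub_eq_of_variance_eq {μ ν : Measure Ω}
    [IsProbabilityMeasure μ] [IsProbabilityMeasure ν] (hXμ : MemLp X 2 μ) (hXν : MemLp X 2 ν)
    (hvar : Var[X; μ] = Var[X; ν]) (c d : ℝ) :
    ∫ ω, (c - X ω) ^ 2 ∂μ - ∫ ω, (d - X ω) ^ 2 ∂ν = (μ[X] - c) ^ 2 - (ν[X] - d) ^ 2 := by
  rw [integral_const_sub_sq_eq_variance_add_sq hXμ, integral_const_sub_sq_eq_variance_add_sq hXν,
    hvar]
  ring

end ProbabilityTheory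

theorem gaps_as_squared_bias_differences_general
    {Ω : Type*} [MeasurableSpace Ω] (μ : Measure Ω) [IsProbabilityMeasure μ]
    (X O : Ω → ℝ) (G : Set Ω)
    (hX2 : MemLp X 2 μ)
    (μgO μngO μO LgGroup LngGroup LgPop LngPop
      BgGroup BngGroup BgPop BngPop ΔGroup ΔPop : ℝ)
    (hLgGroup : LgGroup = ∫ ω, (μgO - X ω) ^ 2 ∂(μ[|O ⁻¹' {0} ∩ G]))
    (hLngGroup : LngGroup = ∫ ω, (μngO - X ω) ^ 2 ∂(μ[|O ⁻¹' {0} ∩ Gᶜ]))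
    (hLgPop : LgPop = ∫ ω, (μO - X ω) ^ 2 ∂(μ[|O ⁻¹' {0} ∩ G]))
    (hLngPop : LngPop = ∫ ω, (μO - X ω) ^ 2 ∂(μ[|O ⁻¹' {0} ∩ Gᶜ]))
    (hBgGroup : BgGroup = (∫ ω, X ω ∂(μ[|O ⁻¹' {0} ∩ G])) - μgO)
    (hBngGroup : BngGroup = (∫ ω, X ω ∂(μ[|O ⁻¹' {0} ∩ Gᶜ])) - μngO)
    (hBgPop : BgPop = (∫ ω, X ω ∂(μ[|O ⁻¹' {0} ∩ G])) - μO)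
    (hBngPop : BngPop = (∫ ω, X ω ∂(μ[|O ⁻¹' {0} ∩ Gᶜ])) - μO)
    (hΔGroup : ΔGroup = LgGroup - LngGroup)
    (hΔPop : ΔPop = LgPop - LngPop)
    (hpos0g : 0 < μ (O ⁻¹' {0} ∩ G))
    (hpos0ng : 0 < μ (O ⁻¹' {0} ∩ Gᶜ))
    (hvar : variance X (μ[|O ⁻¹' {0} ∩ G]) = variance X (μ[|O ⁻¹' {0} ∩ Gᶜ])) :
    ΔGroup = BgGroup ^ 2 - BngGroup ^ 2 ∧ ΔPop = BgPop ^ 2 - BngPop ^ 2 := by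
  have := cond_isProbabilityMeasure (μ := μ) hpos0g.ne'
  have := cond_isProbabilityMeasure (μ := μ) hpos0ng.ne'
  have gap := integral_const_sub_sq_sub_eq_of_variance_eq (hX2.cond_s11 hpos0g.ne')
    (hX2.cond_s11 hpos0ng.ne') hvar
  subst hΔGroup hΔPop hLgGroup hLngGroup hLgPop hLngPop hBgGroup hBngGroup hBgPop hBngPop
  exact ⟨gap μgO μngO, gap μO μO⟩

/-- When unobserved-data variances agree across groups, the reconstruction
error gaps are differences of squared imputation biases. -/
theorem gaps_as_squared_bias_differences
    {Ω : Type*} [MeasurableSpace Ω] (μ : Measure Ω) [IsProbabilityMeasure μ]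
    (X O : Ω → ℝ) (G : Set Ω)
    (hXm : Measurable X) (hOm : Measurable O) (hG : MeasurableSet G)
    (hX2 : MemLp X 2 μ)
    (hO01 : ∀ ω, O ω = 0 ∨ O ω = 1)
    (μgO μngO μO LgGroup LngGroup LgPop LngPop
      BgGroup BngGroup BgPop BngPop ΔGroup ΔPop : ℝ)
    (hμgO : μgO = ∫ ω, X ω ∂(μ[|O ⁻¹' {1} ∩ G]))
    (hμngO : μngO = ∫ ω, X ω ∂(μ[|O ⁻¹' {1} ∩ Gᶜ]))
    (hμO : μO = ∫ ω, X ω ∂(μ[|O ⁻¹' {1}]))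
    (hLgGroup : LgGroup = ∫ ω, (μgO - X ω) ^ 2 ∂(μ[|O ⁻¹' {0} ∩ G]))
    (hLngGroup : LngGroup = ∫ ω, (μngO - X ω) ^ 2 ∂(μ[|O ⁻¹' {0} ∩ Gᶜ]))
    (hLgPop : LgPop = ∫ ω, (μO - X ω) ^ 2 ∂(μ[|O ⁻¹' {0} ∩ G]))
    (hLngPop : LngPop = ∫ ω, (μO - X ω) ^ 2 ∂(μ[|O ⁻¹' {0} ∩ Gᶜ]))
    (hBgGroup : BgGroup = (∫ ω, X ω ∂(μ[|O ⁻¹' {0} ∩ G])) - μgO)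
    (hBngGroup : BngGroup = (∫ ω, X ω ∂(μ[|O ⁻¹' {0} ∩ Gᶜ])) - μngO)
    (hBgPop : BgPop = (∫ ω, X ω ∂(μ[|O ⁻¹' {0} ∩ G])) - μO)
    (hBngPop : BngPop = (∫ ω, X ω ∂(μ[|O ⁻¹' {0} ∩ Gᶜ])) - μO)
    (hΔGroup : ΔGroup = LgGroup - LngGroup)
    (hΔPop : ΔPop = LgPop - LngPop)
    (hpos1g : 0 < μ (O ⁻¹' {1} ∩ G)) (hpos0g : 0 < μ (O ⁻¹' {0} ∩ G))
    (hpos1ng : 0 < μ (O ⁻¹' {1} ∩ Gᶜ)) (hpos0ng : 0 < μ (O ⁻¹' {0} ∩ Gᶜ))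
    (hpos1 : 0 < μ (O ⁻¹' {1}))
    (hvar : variance X (μ[|O ⁻¹' {0} ∩ G]) = variance X (μ[|O ⁻¹' {0} ∩ Gᶜ])) :
    ΔGroup = BgGroup ^ 2 - BngGroup ^ 2 ∧ ΔPop = BgPop ^ 2 - BngPop ^ 2 :=
  gaps_as_squared_bias_differences_general μ X O G hX2 μgO μngO μO LgGroup LngGroup LgPop LngPop
    BgGroup BngGroup BgPop BngPop ΔGroup ΔPop hLgGroup hLngGroup hLgPop hLngPop hBgGroup hBngGroup
    hBgPop hBngPop hΔGroup hΔPop hpos0g hpos0ng hvar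
end
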